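/- arXiv:2309.09004 — 3 statements merged into one kernel-verified Lean document; each statement's English description precedes it below -/
import Mathlib

section
/- Let d₁, d₂ ≥ 1 be integers, 1 ≤ p < ∞, and let G₁ ⊂ ℝ^{d₁} and G₂ ⊂ ℝ^{d₂} be bounded open sets. Let f : G₁ × ℝ^{d₁} × G₂ → ℝ be measurable and such that for almost every x̄ ∈ G₁ the function (y,ζ) ↦ f(x̄,y,ζ) is bounded and continuous on ℝ^{d₁} × G₂. Then for every ε > 0, writing points of the thin domain G_ε = G₁ × εG₂ as x = (x̄, x̂) with x̄ ∈ G₁ and x̂ ∈ εG₂, one has ε^{-d₂} ∫_{G₁ × εG₂} |f(x̄, x̄/ε, x̂/ε)|^p dx ≤ ∫_{G₁} sup_{y ∈ ℝ^{d₁}} ∫_{G₂} |f(x̄, y, ζ)|^p dζ dx̄, where the inequality is understood in [0, +∞]. -/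
open MeasureTheory Module
open scoped Pointwise ENNReal

/-! Integrate first in the thin variable `x̂ ∈ εG₂` (Tonelli's inequality). The substitution
`ζ = x̂/ε` turns that inner integral into `ε^{d₂} ∫_{G₂} |f(x̄, x̄/ε, ζ)|^p`, and freezing
the fast variable at `y = x̄/ε` bounds it by the supremum over `y`. -/

namespace MeasureTheory.Measure

variable {E : Type*} [NormedAddCommGroup E] [NormedSpace ℝ E] [MeasurableSpace E] [BorelSpace E]
  [FiniteDimensional ℝ E] (μ : Measure E) [IsAddHaarMeasure μ]

theorem setLIntegral_comp_inv_smul (g : E → ℝ≥0∞) {r : ℝ} (s : Set E) (hr : r ≠ 0) :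
    ∫⁻ x in r • s, g (r⁻¹ • x) ∂μ = ENNReal.ofReal |r ^ finrank ℝ E| * ∫⁻ x in s, g x ∂μ := by
  let e : E ≃ᵐ E := MeasurableEquiv.smul₀ r⁻¹ (inv_ne_zero hr)
  have hpre : e ⁻¹' s = r • s := by
    rw [MeasurableEquiv.coe_smul₀, Set.preimage_smul₀ (inv_ne_zero hr), inv_inv]
  calc ∫⁻ x in r • s, g (r⁻¹ • x) ∂μ = ∫⁻ x, g x ∂(μ.restrict (e ⁻¹' s)).map e := by
        rw [lintegral_map_equiv, hpre]; rfl
    _ = ENNReal.ofReal |r ^ finrank ℝ E| * ∫⁻ x in s, g x ∂μ := by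
        rw [← e.restrict_map, MeasurableEquiv.coe_smul₀, map_addHaar_smul μ (inv_ne_zero hr),
          restrict_smul, lintegral_smul_measure, inv_pow, inv_inv, smul_eq_mul]

end MeasureTheory.Measure

section ThinDomain

variable {X Y F : Type*} [MeasurableSpace X] [NormedAddCommGroup F] [NormedSpace ℝ F]
  [MeasurableSpace F] [BorelSpace F] [FiniteDimensional ℝ F]
  (μ : Measure X) [SFinite μ] (ν : Measure F) [ν.IsAddHaarMeasure]

theorem setLIntegral_prod_smul_le_mul_iSup (g : X → Y → F → ℝ≥0∞) (φ : X → Y) (s : Set X)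
    (t : Set F) {ε : ℝ} (hε : 0 < ε) :
    ∫⁻ x in s ×ˢ (ε • t), g x.1 (φ x.1) (ε⁻¹ • x.2) ∂μ.prod ν ≤
      ENNReal.ofReal (ε ^ finrank ℝ F) * ∫⁻ x in s, ⨆ y, ∫⁻ ζ in t, g x y ζ ∂ν ∂μ := by
  rw [← Measure.prod_restrict, ← lintegral_const_mul' _ _ ENNReal.ofReal_ne_top]
  refine (lintegral_prod_le _).trans (lintegral_mono fun x => ?_)
  rw [Measure.setLIntegral_comp_inv_smul ν (g x (φ x)) t hε.ne', abs_of_pos (by positivity)]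
  exact mul_le_mul_right (le_iSup (fun y => ∫⁻ ζ in t, g x y ζ ∂ν) (φ x)) _

end ThinDomain

theorem stmt2_general (d₁ d₂ : ℕ) (p : ℝ)
    (G₁ : Set (Fin d₁ → ℝ))
    (G₂ : Set (Fin d₂ → ℝ))
    (f : (Fin d₁ → ℝ) → (Fin d₁ → ℝ) → (Fin d₂ → ℝ) → ℝ)
    (ε : ℝ) (hε : 0 < ε) :
    (ENNReal.ofReal (ε ^ d₂))⁻¹ *
        ∫⁻ x in G₁ ×ˢ (ε • G₂), ENNReal.ofReal (|f x.1 (ε⁻¹ • x.1) (ε⁻¹ • x.2)| ^ p) ≤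
      ∫⁻ xb in G₁, ⨆ y : Fin d₁ → ℝ, ∫⁻ ζ in G₂, ENNReal.ofReal (|f xb y ζ| ^ p) := by
  have hscale := setLIntegral_prod_smul_le_mul_iSup volume volume
    (fun xb y ζ => ENNReal.ofReal (|f xb y ζ| ^ p)) (ε⁻¹ • ·) G₁ G₂ hε
  rw [finrank_fin_fun] at hscale
  rw [ENNReal.inv_mul_le_iff (by positivity) ENNReal.ofReal_ne_top, Measure.volume_eq_prod]
  exact hscale

/-- **Inequality (2.4) of Lemma 2.1.** For `f : G₁ × ℝ^{d₁} × G₂ → ℝ` measurable, with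
`f(xb, ·, ·)` bounded and continuous on `ℝ^{d₁} × G₂` for a.e. `xb ∈ G₁`, and any `ε > 0`,
`ε^{-d₂} ∫_{G₁ × εG₂} |f(xb, xb/ε, x̂/ε)|^p dx ≤ ∫_{G₁} sup_y ∫_{G₂} |f(xb,y,ζ)|^p dζ dxb`,
the inequality being understood in `[0,∞]`. -/
theorem stmt2 (d₁ d₂ : ℕ) (hd₁ : 1 ≤ d₁) (hd₂ : 1 ≤ d₂) (p : ℝ) (hp : 1 ≤ p)
    (G₁ : Set (Fin d₁ → ℝ)) (hG₁o : IsOpen G₁) (hG₁b : Bornology.IsBounded G₁)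
    (G₂ : Set (Fin d₂ → ℝ)) (hG₂o : IsOpen G₂) (hG₂b : Bornology.IsBounded G₂)
    (f : (Fin d₁ → ℝ) → (Fin d₁ → ℝ) → (Fin d₂ → ℝ) → ℝ)
    (hfm : Measurable (fun q : (Fin d₁ → ℝ) × (Fin d₁ → ℝ) × (Fin d₂ → ℝ) =>
      f q.1 q.2.1 q.2.2))
    (hfbc : ∀ᵐ xb ∂(volume.restrict G₁),
      (∃ M : ℝ, ∀ y ζ, ζ ∈ G₂ → |f xb y ζ| ≤ M) ∧
        ContinuousOn (fun q : (Fin d₁ → ℝ) × (Fin d₂ → ℝ) => f xb q.1 q.2)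
          (Set.univ ×ˢ G₂))
    (ε : ℝ) (hε : 0 < ε) :
    (ENNReal.ofReal (ε ^ d₂))⁻¹ *
        ∫⁻ x in G₁ ×ˢ (ε • G₂), ENNReal.ofReal (|f x.1 (ε⁻¹ • x.1) (ε⁻¹ • x.2)| ^ p) ≤
      ∫⁻ xb in G₁, ⨆ y : Fin d₁ → ℝ, ∫⁻ ζ in G₂, ENNReal.ofReal (|f xb y ζ| ^ p) :=
  stmt2_general d₁ d₂ p G₁ G₂ f ε hε
end

section
/- Let m ≥ 1 and let G ⊂ ℝ^m be a bounded open set. Let C_b(ℝ^m) denote the Banach space of bounded continuous real-valued functions on ℝ^m with the supremum norm. Let g : G → C_b(ℝ^m) be Bochner integrable and let M : G → ℝ be Lebesgue integrable. Assume that for almost every x ∈ G, the dilations of g(x) converge weakly-* in L^∞(ℝ^m) to the constant M(x), i.e., for every φ ∈ L¹(ℝ^m), ∫_{ℝ^m} g(x)(y/ε) φ(y) dy → M(x)·∫_{ℝ^m} φ(y) dy as ε → 0⁺. Then ∫_G g(x)(x/ε) dx → ∫_G M(x) dx as ε → 0⁺. -/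
/-!
Both sides of the limit are `1`-Lipschitz in `g` for the `L¹(G; C_b)` norm: the left side
uniformly in `ε`, the right side because testing the weak-* convergence against the indicator of
`G` shows that the mean value is `1`-Lipschitz for the sup norm. For a simple function whose values
have mean values, the claim is a finite sum of weak-* limits, each tested against the indicator of
a fibre. Approximating `g` in `L¹` by simple functions taking values in `g(T)`, where `T` is the
set of points at which the mean value hypothesis holds, the two limits can be interchanged
(Moore–Osgood).
-/

open Filter MeasureTheory Topology Set
open scoped ENNReal BoundedContinuousFunction

section Evaluation

variable {α X : Type*} [MeasurableSpace α] [TopologicalSpace X] {ν : Measure α}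
  {g g₁ g₂ : α → X →ᵇ ℝ} {p : α → X}

theorem MeasureTheory.Integrable.apply_of_aestronglyMeasurable (hg : Integrable g ν)
    (hp : AEStronglyMeasurable p ν) : Integrable (fun x => g x (p x)) ν :=
  hg.norm.mono' (continuous_eval.comp_aestronglyMeasurable
    (hg.1.prodMk hp)) (Eventually.of_forall fun x => by simpa using (g x).norm_coe_le_norm (p x))

theorem enorm_integral_apply_sub_le (hg₁ : Integrable g₁ ν) (hg₂ : Integrable g₂ ν)
    (hp : AEStronglyMeasurable p ν) :
    ‖∫ x, g₁ x (p x) ∂ν - ∫ x, g₂ x (p x) ∂ν‖ₑ ≤ ∫⁻ x, ‖g₁ x - g₂ x‖ₑ ∂ν := by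
  rw [← integral_sub (hg₁.apply_of_aestronglyMeasurable hp) (hg₂.apply_of_aestronglyMeasurable hp)]
  refine (enorm_integral_le_lintegral_enorm _).trans (lintegral_mono fun x => ?_)
  simpa [enorm_eq_nnnorm] using (g₁ x - g₂ x).nnnorm_coe_le_nnnorm (p x)

theorem tendstoUniformly_integral_apply {ι κ : Type*} {l : Filter ι} {F : ι → α → X →ᵇ ℝ}
    {q : κ → α → X} (hF : ∀ i, Integrable (F i) ν) (hg : Integrable g ν)
    (hq : ∀ t, AEStronglyMeasurable (q t) ν)
    (hFg : Tendsto (fun i => ∫⁻ x, ‖F i x - g x‖ₑ ∂ν) l (𝓝 0)) :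
    TendstoUniformly (fun i t => ∫ x, F i x (q t x) ∂ν) (fun t => ∫ x, g x (q t x) ∂ν) l := by
  refine EMetric.tendstoUniformly_iff.2 fun δ hδ =>
    (hFg.eventually (gt_mem_nhds hδ)).mono fun i hi t => ?_
  rw [edist_eq_enorm_sub]
  calc _ ≤ ∫⁻ x, ‖g x - F i x‖ₑ ∂ν := enorm_integral_apply_sub_le hg (hF i) (hq t)
    _ < δ := by simpa only [enorm_sub_rev] using hi

end Evaluation

theorem MeasureTheory.Integrable.exists_simpleFunc_mem_image_tendsto {α E : Type*}
    [MeasurableSpace α] [NormedAddCommGroup E] [MeasurableSpace E] [BorelSpace E]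
    {ν : Measure α} [IsFiniteMeasure ν] [NeZero ν] {g : α → E} (hg : Integrable g ν) {T : Set α}
    (hT : ∀ᵐ x ∂ν, x ∈ T) :
    ∃ σ : ℕ → SimpleFunc α E, (∀ n x, σ n x ∈ g '' T) ∧
      Tendsto (fun n => ∫⁻ x, ‖σ n x - g x‖ₑ ∂ν) atTop (𝓝 0) := by
  obtain ⟨g', hg'm, hgg'⟩ := hg.aestronglyMeasurable
  set T' := {x | x ∈ T ∧ g x = g' x}
  have hT' : ∀ᵐ x ∂ν, x ∈ T' := hT.and hgg'
  obtain ⟨x₀, hx₀⟩ := hT'.exists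
  have hsub : g' '' T' ⊆ g '' T := by
    rintro _ ⟨x, hx, rfl⟩
    exact ⟨x, hx.1, hx.2⟩
  have : TopologicalSpace.SeparableSpace (g' '' T') :=
    (hg'm.isSeparable_range.mono (image_subset_range _ _)).separableSpace
  have hx₀' := mem_image_of_mem g' hx₀
  refine ⟨SimpleFunc.approxOn g' hg'm.measurable _ _ hx₀',
    fun n x => hsub (SimpleFunc.approxOn_mem hg'm.measurable hx₀' n x), ?_⟩
  refine (SimpleFunc.tendsto_approxOn_L1_enorm hg'm.measurable hx₀'
    (hT'.mono fun x hx => subset_closure (mem_image_of_mem g' hx))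
    ((hg.congr hgg').sub (integrable_const _)).2).congr fun n => lintegral_congr_ae ?_
  filter_upwards [hgg'] with x hx
  rw [hx]

theorem MeasureTheory.SimpleFunc.integral_eq_sum_setIntegral_fiber {α β F : Type*}
    [MeasurableSpace α] [NormedAddCommGroup F] [NormedSpace ℝ F] {ν : Measure α}
    (σ : SimpleFunc α β) (h : β → α → F) (hh : ∀ c ∈ σ.range, IntegrableOn (h c) (σ ⁻¹' {c}) ν) :
    ∫ x, h (σ x) x ∂ν = ∑ c ∈ σ.range, ∫ x in σ ⁻¹' {c}, h c x ∂ν := by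
  classical
  calc ∫ x, h (σ x) x ∂ν = ∫ x, ∑ c ∈ σ.range, (σ ⁻¹' {c}).indicator (h c) x ∂ν := by
        congr 1 with x
        rw [Finset.sum_eq_single_of_mem (σ x) (σ.mem_range_self x)]
        · simp
        · intro c _ hc
          exact indicator_of_notMem (fun hx => hc hx.symm) _
    _ = ∑ c ∈ σ.range, ∫ x in σ ⁻¹' {c}, h c x ∂ν := by
        rw [integral_finsetSum _ fun c hc =>
          (integrable_indicator_iff (σ.measurableSet_fiber c)).2 (hh c hc)]
        simp_rw [integral_indicator (σ.measurableSet_fiber _)]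

variable {E : Type*} [NormedAddCommGroup E] [NormedSpace ℝ E] [MeasurableSpace E]

/-- `a` is the mean value `M(f)` of `f` in the sense of the paper: the dilations
`y ↦ f (y / ε)` converge weakly-* to the constant `a` as `ε → 0⁺`. -/
def HasMeanValue (μ : Measure E) (f : E →ᵇ ℝ) (a : ℝ) : Prop :=
  ∀ φ : E → ℝ, Integrable φ μ →
    Tendsto (fun ε : ℝ => ∫ y, f (ε⁻¹ • y) * φ y ∂μ) (𝓝[>] 0) (𝓝 (a * ∫ y, φ y ∂μ))

variable {μ : Measure E}

namespace HasMeanValue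

variable {f f' : E →ᵇ ℝ} {a b : ℝ} {A : Set E}

theorem tendsto_setIntegral (hf : HasMeanValue μ f a) (hA : MeasurableSet A) (hA' : μ A ≠ ∞) :
    Tendsto (fun ε : ℝ => ∫ y in A, f (ε⁻¹ • y) ∂μ) (𝓝[>] 0) (𝓝 (a * μ.real A)) := by
  have h := hf (A.indicator 1) ((integrable_indicator_iff hA).2 (integrableOn_const hA'))
  rw [integral_indicator_one hA] at h
  refine h.congr fun ε => ?_
  rw [← integral_indicator hA]
  congr 1 with y
  by_cases hy : y ∈ A <;> simp [hy]

theorem edist_le [SecondCountableTopology E] [OpensMeasurableSpace E]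
    (hf : HasMeanValue μ f a) (hf' : HasMeanValue μ f' b)
    (hA : MeasurableSet A) (hA₀ : μ A ≠ 0) (hA' : μ A ≠ ∞) : edist a b ≤ edist f f' := by
  have hbound (ε : ℝ) :
      ‖∫ y in A, f (ε⁻¹ • y) ∂μ - ∫ y in A, f' (ε⁻¹ • y) ∂μ‖ₑ ≤ edist f f' * μ A := by
    have := isFiniteMeasure_restrict.2 hA'
    simpa [edist_eq_enorm_sub, mul_comm] using enorm_integral_apply_sub_le
      (g₁ := fun _ => f) (g₂ := fun _ => f') (integrable_const (μ := μ.restrict A) f)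
      (integrable_const f') (continuous_const_smul ε⁻¹).aestronglyMeasurable
  have hlim := ((hf.tendsto_setIntegral hA hA').sub (hf'.tendsto_setIntegral hA hA')).enorm
  have := le_of_tendsto hlim (Eventually.of_forall hbound)
  rw [← sub_mul, enorm_mul, Real.enorm_eq_ofReal measureReal_nonneg, measureReal_def,
    ENNReal.ofReal_toReal hA', ← edist_eq_enorm_sub] at this
  exact (ENNReal.mul_le_mul_iff_left hA₀ hA').1 this

end HasMeanValue

variable [SecondCountableTopology E] [OpensMeasurableSpace E] {G : Set E}

theorem MeasureTheory.SimpleFunc.tendsto_setIntegral_apply_inv_smul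
    (σ : SimpleFunc E (E →ᵇ ℝ)) {a : (E →ᵇ ℝ) → ℝ} (hσ : ∀ c ∈ σ.range, HasMeanValue μ c (a c))
    (hG : MeasurableSet G) (hG' : μ G ≠ ∞) :
    Tendsto (fun ε : ℝ => ∫ x in G, σ x (ε⁻¹ • x) ∂μ) (𝓝[>] 0) (𝓝 (∫ x in G, a (σ x) ∂μ)) := by
  have := isFiniteMeasure_restrict.2 hG'
  have hfiber (c : E →ᵇ ℝ) : (μ.restrict G).restrict (σ ⁻¹' {c}) = μ.restrict (σ ⁻¹' {c} ∩ G) :=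
    Measure.restrict_restrict (σ.measurableSet_fiber c)
  rw [σ.integral_eq_sum_setIntegral_fiber _ fun c _ => (integrable_const _).integrableOn]
  have hsum (ε : ℝ) := σ.integral_eq_sum_setIntegral_fiber (ν := μ.restrict G)
    (fun c x => c (ε⁻¹ • x)) fun c _ => (integrable_const c).apply_of_aestronglyMeasurable
      (continuous_const_smul ε⁻¹).aestronglyMeasurable
  simp_rw [hsum]
  refine tendsto_finsetSum _ fun c hc => ?_
  rw [hfiber, setIntegral_const, smul_eq_mul, mul_comm]
  exact (hσ c hc).tendsto_setIntegral ((σ.measurableSet_fiber c).inter hG)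
    (measure_ne_top_of_subset inter_subset_right hG')

theorem tendsto_setIntegral_apply_inv_smul (hG : MeasurableSet G) (hG' : μ G ≠ ∞)
    {g : E → E →ᵇ ℝ} (hg : IntegrableOn g G μ) {M : E → ℝ} (hM : IntegrableOn M G μ)
    (hmean : ∀ᵐ x ∂μ.restrict G, HasMeanValue μ (g x) (M x)) :
    Tendsto (fun ε : ℝ => ∫ x in G, g x (ε⁻¹ • x) ∂μ) (𝓝[>] 0) (𝓝 (∫ x in G, M x ∂μ)) := by
  borelize (E →ᵇ ℝ)
  have := isFiniteMeasure_restrict.2 hG'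
  rcases eq_or_ne (μ G) 0 with hG₀ | hG₀
  · simp [Measure.restrict_zero_set hG₀]
  have : NeZero (μ.restrict G) := ⟨by simpa using hG₀⟩
  set T := {x | HasMeanValue μ (g x) (M x)}
  obtain ⟨σ, hσT, herr⟩ := hg.exists_simpleFunc_mem_image_tendsto (T := T) hmean
  set w := Function.invFunOn g T
  have hσ (n : ℕ) (x : E) : HasMeanValue μ (σ n x) (M (w (σ n x))) := by
    obtain ⟨hwT, hgw⟩ := Function.invFunOn_pos (hσT n x)
    have hmean_w : HasMeanValue μ (g (w (σ n x))) (M (w (σ n x))) := hwT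
    rwa [hgw] at hmean_w
  refine TendstoUniformly.tendsto_of_eventually_tendsto
    (tendstoUniformly_integral_apply (fun n => (σ n).integrable_of_isFiniteMeasure) hg
      (fun ε => (continuous_const_smul ε⁻¹).aestronglyMeasurable) herr)
    (Eventually.of_forall fun n => (σ n).tendsto_setIntegral_apply_inv_smul
      (a := fun c => M (w c)) (fun c hc => ?_) hG hG') ?_
  · obtain ⟨x, rfl⟩ := SimpleFunc.mem_range.1 hc
    exact hσ n x
  · refine tendsto_integral_of_L1 M hM.1
      (Eventually.of_forall fun n => ((σ n).map (M ∘ w)).integrable_of_isFiniteMeasure) ?_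
    refine tendsto_of_tendsto_of_tendsto_of_le_of_le tendsto_const_nhds herr (fun _ => zero_le)
      fun n => lintegral_mono_ae ?_
    filter_upwards [hmean] with x hx
    simpa only [edist_eq_enorm_sub] using (hσ n x).edist_le hx hG hG₀ hG'

theorem stmt3_general (m : ℕ) (G : Set (Fin m → ℝ))
    (hGb : Bornology.IsBounded G)
    (g : (Fin m → ℝ) → BoundedContinuousFunction (Fin m → ℝ) ℝ)
    (hg : Integrable g (volume.restrict G))
    (M : (Fin m → ℝ) → ℝ) (hM : Integrable M (volume.restrict G))
    (hmean : ∀ᵐ x ∂(volume.restrict G), ∀ φ : (Fin m → ℝ) → ℝ, Integrable φ volume →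
      Tendsto (fun ε : ℝ => ∫ y, (g x) (ε⁻¹ • y) * φ y) (nhdsWithin 0 (Set.Ioi 0))
        (nhds ((M x) * ∫ y, φ y))) :
    Tendsto (fun ε : ℝ => ∫ x in G, (g x) (ε⁻¹ • x)) (nhdsWithin 0 (Set.Ioi 0))
      (nhds (∫ x in G, M x)) := by
  have hG : volume G ≠ ∞ := hGb.measure_lt_top.ne
  rw [← Measure.restrict_toMeasurable hG] at hg hM hmean ⊢
  exact tendsto_setIntegral_apply_inv_smul (measurableSet_toMeasurable _ _)
    (by rwa [measure_toMeasurable]) hg hM hmean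

/-- **Key convergence step in the proof of (2.5), Lemma 2.1.** Let `G ⊂ ℝ^m` be a bounded
open set, `g : G → C_b(ℝ^m)` Bochner integrable and `M : G → ℝ` Lebesgue integrable. If for
a.e. `x ∈ G` the dilations of `g x` converge weakly-* in `L^∞(ℝ^m)` to the constant `M x`,
then `∫_G g(x)(x/ε) dx → ∫_G M(x) dx` as `ε → 0⁺`. -/
theorem stmt3 (m : ℕ) (hm : 1 ≤ m) (G : Set (Fin m → ℝ)) (hGo : IsOpen G)
    (hGb : Bornology.IsBounded G)
    (g : (Fin m → ℝ) → BoundedContinuousFunction (Fin m → ℝ) ℝ)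
    (hg : Integrable g (volume.restrict G))
    (M : (Fin m → ℝ) → ℝ) (hM : Integrable M (volume.restrict G))
    (hmean : ∀ᵐ x ∂(volume.restrict G), ∀ φ : (Fin m → ℝ) → ℝ, Integrable φ volume →
      Tendsto (fun ε : ℝ => ∫ y, (g x) (ε⁻¹ • y) * φ y) (nhdsWithin 0 (Set.Ioi 0))
        (nhds ((M x) * ∫ y, φ y))) :
    Tendsto (fun ε : ℝ => ∫ x in G, (g x) (ε⁻¹ • x)) (nhdsWithin 0 (Set.Ioi 0))
      (nhds (∫ x in G, M x)) :=
  stmt3_general m G hGb g hg M hM hmean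
end

section
/- Let d ≥ 2 be an integer, Ω ⊂ ℝ^{d−1} a bounded open set, f₁ ∈ L²(Ω; ℝ^{d−1}), and ε > 0. Let u : ℝ^d → ℝ^d be continuously differentiable with compact support contained in the thin domain Ω^ε = Ω × (−ε, ε), and write u = (u', u_d) where u' consists of the first d−1 components of u. Then |∫_{Ω^ε} f₁(x̄) · u'(x) dx| ≤ 2√2 · ε^{3/2} · ‖f₁‖_{L²(Ω)} · ‖∇u‖_{L²(Ω^ε)}. -/
/-!
By Cauchy–Schwarz, first in `ℝ^{d-1}` and then in `L²(Ω^ε)`, the integral is at most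
`‖f₁‖_{L²(Ω^ε)} ‖u'‖_{L²(Ω^ε)}`, and since `f₁` does not depend on `x_d` the first factor is
`√(2ε) ‖f₁‖_{L²(Ω)}`. Every vertical slice `t ↦ u'(xb, t)` vanishes at `t = -ε`, so writing it as
the integral of its derivative and applying Cauchy–Schwarz on `(-ε, ε)` gives the one-dimensional
Poincaré inequality `∫ |u'|² dt ≤ (2ε)² ∫ |∂_d u'|² dt`; integrating over `Ω` (Fubini) yields
`‖u'‖_{L²(Ω^ε)} ≤ 2ε ‖∇u‖_{L²(Ω^ε)}`.
-/

open MeasureTheory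

/-- Points of the thin domain `Ω^ε ⊂ ℝ^d` are written `x = (xb, x_d)` with
`xb ∈ ℝ^{d-1}` and `x_d ∈ ℝ`. -/
abbrev ThinVec (d : ℕ) : Type := (Fin (d - 1) → ℝ) × ℝ

/-- Squared Euclidean magnitude of a vector of `ℝ^d = ℝ^{d-1} × ℝ`. -/
noncomputable def vecSq {d : ℕ} (v : ThinVec d) : ℝ := (∑ i, (v.1 i) ^ 2) + v.2 ^ 2

/-- Squared Frobenius norm `Σ_{i,j} |∂u_i/∂x_j|²` of the Jacobian of a vector field
`u : ℝ^d → ℝ^d`. -/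
noncomputable def jacSq {d : ℕ} (u : ThinVec d → ThinVec d) (x : ThinVec d) : ℝ :=
  (∑ j, vecSq (fderiv ℝ u x ((Pi.single j 1 : Fin (d - 1) → ℝ), (0 : ℝ)))) +
    vecSq (fderiv ℝ u x ((0 : Fin (d - 1) → ℝ), (1 : ℝ)))

open Set

section CauchySchwarz

variable {α : Type*} [MeasurableSpace α] {μ : Measure α}

theorem sq_integral_le_integral_mul_integral {φ A B : α → ℝ} (hA : Integrable A μ)
    (hB : Integrable B μ) (hA0 : 0 ≤ A) (hB0 : 0 ≤ B) (h : ∀ x, φ x ^ 2 ≤ A x * B x) :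
    (∫ x, φ x ∂μ) ^ 2 ≤ (∫ x, A x ∂μ) * ∫ x, B x ∂μ := by
  have memLp_sqrt : ∀ {F : α → ℝ}, Integrable F μ → 0 ≤ F → MemLp (fun x ↦ √(F x)) 2 μ :=
    fun {F} hF hF0 ↦ (memLp_two_iff_integrable_sq
      (Real.continuous_sqrt.comp_aestronglyMeasurable hF.aestronglyMeasurable)).2
      (by simpa only [Real.sq_sqrt (hF0 _)] using hF)
  have ha := memLp_sqrt hA hA0
  have hb := memLp_sqrt hB hB0
  have hab : |∫ x, φ x ∂μ| ≤ ∫ x, √(A x) * √(B x) ∂μ :=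
    (abs_integral_le_integral_abs).trans <| integral_mono_of_nonneg
      (ae_of_all _ fun _ ↦ abs_nonneg _) (ha.integrable_mul hb) (ae_of_all _ fun x ↦ by
        show |φ x| ≤ √(A x) * √(B x)
        rw [← Real.sqrt_mul (hA0 x)]; exact Real.abs_le_sqrt (h x))
  have holder := integral_mul_le_Lp_mul_Lq_of_nonneg Real.HolderConjugate.two_two
    (ae_of_all _ fun x ↦ Real.sqrt_nonneg (A x)) (ae_of_all _ fun x ↦ Real.sqrt_nonneg (B x))
    (by simpa using ha) (by simpa using hb)
  simp only [Real.rpow_two, Real.sq_sqrt (hA0 _), Real.sq_sqrt (hB0 _), ← Real.sqrt_eq_rpow]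
    at holder
  calc (∫ x, φ x ∂μ) ^ 2 = |∫ x, φ x ∂μ| ^ 2 := (sq_abs _).symm
    _ ≤ (√(∫ x, A x ∂μ) * √(∫ x, B x ∂μ)) ^ 2 := by gcongr; exact hab.trans holder
    _ = (∫ x, A x ∂μ) * ∫ x, B x ∂μ := by
      rw [mul_pow, Real.sq_sqrt (integral_nonneg hA0), Real.sq_sqrt (integral_nonneg hB0)]

end CauchySchwarz

theorem integral_prod_le_mul_of_forall_integral_le {α β : Type*} [MeasurableSpace α]
    [MeasurableSpace β] {μ : Measure α} {ν : Measure β} [SFinite μ] [SFinite ν]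
    {g h : α × β → ℝ} (hg : Integrable g (μ.prod ν)) (hh : Integrable h (μ.prod ν)) (c : ℝ)
    (hgh : ∀ x, ∫ y, g (x, y) ∂ν ≤ c * ∫ y, h (x, y) ∂ν) :
    ∫ z, g z ∂μ.prod ν ≤ c * ∫ z, h z ∂μ.prod ν := by
  rw [integral_prod g hg, integral_prod h hh, ← integral_const_mul]
  exact integral_mono hg.integral_prod_left (hh.integral_prod_left.const_mul c) hgh

lemma volume_restrict_prod {α β : Type*} [MeasureSpace α] [MeasureSpace β]
    [SFinite (volume : Measure α)] [SFinite (volume : Measure β)] (s : Set α) (t : Set β) :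
    volume.restrict (s ×ˢ t) = (volume.restrict s).prod (volume.restrict t) := by
  rw [Measure.volume_eq_prod, Measure.prod_restrict]

theorem integral_Ioo_sq_le_of_hasDerivAt {v v' : ℝ → ℝ} {a b : ℝ} (hab : a ≤ b)
    (hv : ∀ t, HasDerivAt v (v' t) t) (hv' : Continuous v') (ha : v a = 0) :
    ∫ t in Ioo a b, v t ^ 2 ≤ (b - a) ^ 2 * ∫ t in Ioo a b, v' t ^ 2 := by
  rw [← integral_Ioc_eq_integral_Ioo, ← integral_Ioc_eq_integral_Ioo]
  have hv_cont : Continuous v := continuous_iff_continuousAt.2 fun t ↦ (hv t).continuousAt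
  set K := ∫ t in Ioc a b, v' t ^ 2
  have hpoint : ∀ t ∈ Ioc a b, v t ^ 2 ≤ (b - a) * K := by
    intro t ⟨hat, htb⟩
    have hFTC : v t = ∫ s in Ioc a t, v' s := by
      rw [← intervalIntegral.integral_of_le hat.le, intervalIntegral.integral_eq_sub_of_hasDerivAt
        (fun s _ ↦ hv s) (hv'.intervalIntegrable a t), ha, sub_zero]
    calc v t ^ 2 ≤ (∫ s in Ioc a t, v' s ^ 2) * ∫ s in Ioc a t, (1 : ℝ) := by
          rw [hFTC]
          exact sq_integral_le_integral_mul_integral ((hv'.pow 2).integrableOn_Ioc)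
            (integrableOn_const (by simp)) (fun _ ↦ sq_nonneg _) (fun _ ↦ zero_le_one)
            (fun _ ↦ (mul_one _).ge)
      _ = (∫ s in Ioc a t, v' s ^ 2) * (t - a) := by
          rw [setIntegral_const, Real.volume_real_Ioc_of_le hat.le, smul_eq_mul, mul_one]
      _ ≤ K * (b - a) := by
          gcongr
          exact setIntegral_mono_set (hv'.pow 2).integrableOn_Ioc
              (ae_of_all _ fun _ ↦ sq_nonneg _) (Ioc_subset_Ioc_right htb).eventuallyLE
      _ = (b - a) * K := mul_comm _ _
  calc ∫ t in Ioc a b, v t ^ 2 ≤ ∫ t in Ioc a b, (b - a) * K :=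
        setIntegral_mono_on (hv_cont.pow 2).integrableOn_Ioc (integrableOn_const (by simp))
          measurableSet_Ioc hpoint
    _ = (b - a) ^ 2 * K := by
        rw [setIntegral_const, Real.volume_real_Ioc_of_le hab, smul_eq_mul]; ring

section ThinDomain

variable {d : ℕ} {u : ThinVec d → ThinVec d}

lemma vecSq_nonneg (v : ThinVec d) : 0 ≤ vecSq v :=
  add_nonneg (Finset.sum_nonneg fun _ _ ↦ sq_nonneg _) (sq_nonneg _)

lemma sum_sq_fst_fderiv_vertical_le_jacSq (x : ThinVec d) :
    ∑ i, (fderiv ℝ u x (0, 1)).1 i ^ 2 ≤ jacSq u x :=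
  (le_add_of_nonneg_right (sq_nonneg _)).trans
    (le_add_of_nonneg_left (Finset.sum_nonneg fun _ _ ↦ vecSq_nonneg _))

lemma continuous_jacSq (hu : ContDiff ℝ 1 u) : Continuous (jacSq u) := by
  have := hu.continuous_fderiv one_ne_zero
  unfold jacSq vecSq
  fun_prop

lemma hasCompactSupport_jacSq (hus : HasCompactSupport u) : HasCompactSupport (jacSq u) := by
  refine (hus.fderiv ℝ).mono' fun x hx ↦ ?_
  by_contra hx'
  simp [jacSq, vecSq, image_eq_zero_of_notMem_tsupport hx'] at hx

theorem integral_sum_sq_fst_slice_le (hu : ContDiff ℝ 1 u) {a b : ℝ} (hab : a ≤ b)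
    (xb : Fin (d - 1) → ℝ) (hua : u (xb, a) = 0) :
    ∫ t in Ioo a b, ∑ i, (u (xb, t)).1 i ^ 2 ≤ (b - a) ^ 2 * ∫ t in Ioo a b, jacSq u (xb, t) := by
  set w : ℝ → ThinVec d := fun t ↦ fderiv ℝ u (xb, t) (0, 1)
  have hw : Continuous w := by
    have := hu.continuous_fderiv one_ne_zero
    fun_prop
  have hderiv : ∀ i t, HasDerivAt (fun s ↦ (u (xb, s)).1 i) ((w t).1 i) t := by
    intro i t
    have hslice : HasDerivAt (fun s ↦ u (xb, s)) (w t) t :=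
      ((hu.differentiable one_ne_zero) _).hasFDerivAt.comp_hasDerivAt t
        ((hasDerivAt_const t xb).prodMk (hasDerivAt_id t))
    exact ((ContinuousLinearMap.proj i).comp
      (ContinuousLinearMap.fst ℝ (Fin (d - 1) → ℝ) ℝ)).hasFDerivAt.comp_hasDerivAt t hslice
  have hint : ∀ g : ℝ → ℝ, Continuous g → IntegrableOn g (Ioo a b) := fun g hg ↦
    hg.integrableOn_Icc.mono_set Ioo_subset_Icc_self
  calc ∫ t in Ioo a b, ∑ i, (u (xb, t)).1 i ^ 2 = ∑ i, ∫ t in Ioo a b, (u (xb, t)).1 i ^ 2 :=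
        integral_finsetSum _ fun i _ ↦ hint _ (by fun_prop)
    _ ≤ ∑ i, (b - a) ^ 2 * ∫ t in Ioo a b, (w t).1 i ^ 2 :=
        Finset.sum_le_sum fun i _ ↦ integral_Ioo_sq_le_of_hasDerivAt hab (hderiv i) (by fun_prop)
          (by simp [hua])
    _ = (b - a) ^ 2 * ∫ t in Ioo a b, ∑ i, (w t).1 i ^ 2 := by
        rw [← Finset.mul_sum, integral_finsetSum _ fun i _ ↦ hint _ (by fun_prop)]
    _ ≤ (b - a) ^ 2 * ∫ t in Ioo a b, jacSq u (xb, t) :=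
        mul_le_mul_of_nonneg_left (integral_mono
          (integrable_finsetSum _ fun i _ ↦ hint (fun t ↦ (w t).1 i ^ 2) (by fun_prop))
          (hint (fun t ↦ jacSq u (xb, t)) ((continuous_jacSq hu).comp (by fun_prop)))
          fun t ↦ sum_sq_fst_fderiv_vertical_le_jacSq _) (sq_nonneg _)

lemma integrable_sum_sq_fst (hu : Continuous u) (hus : HasCompactSupport u) :
    Integrable (fun x ↦ ∑ i, (u x).1 i ^ 2) :=
  (by fun_prop : Continuous fun x ↦ ∑ i, (u x).1 i ^ 2).integrable_of_hasCompactSupport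
    (hus.comp_left (g := fun v : ThinVec d ↦ ∑ i, v.1 i ^ 2) (by simp))

theorem setIntegral_sum_sq_fst_le_jacSq (hu : ContDiff ℝ 1 u) (hus : HasCompactSupport u)
    {Ω : Set (Fin (d - 1) → ℝ)} {a b : ℝ} (hab : a ≤ b) (husub : tsupport u ⊆ Ω ×ˢ Ioo a b) :
    ∫ x in Ω ×ˢ Ioo a b, ∑ i, (u x).1 i ^ 2 ≤ (b - a) ^ 2 * ∫ x in Ω ×ˢ Ioo a b, jacSq u x := by
  have hG := (integrable_sum_sq_fst hu.continuous hus).restrict (s := Ω ×ˢ Ioo a b)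
  have hJ := ((continuous_jacSq hu).integrable_of_hasCompactSupport (μ := volume)
    (hasCompactSupport_jacSq hus)).restrict (s := Ω ×ˢ Ioo a b)
  rw [volume_restrict_prod] at hG hJ ⊢
  refine integral_prod_le_mul_of_forall_integral_le hG hJ _ fun xb ↦
    integral_sum_sq_fst_slice_le hu hab xb (image_eq_zero_of_notMem_tsupport fun h ↦ ?_)
  exact lt_irrefl _ (husub h).2.1

end ThinDomain

theorem stmt9_general (d : ℕ) (Ω : Set (Fin (d - 1) → ℝ))
    (f₁ : (Fin (d - 1) → ℝ) → (Fin (d - 1) → ℝ))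
    (hf₁ : MemLp f₁ 2 (volume.restrict Ω)) (ε : ℝ) (hε : 0 < ε)
    (u : ThinVec d → ThinVec d) (hu : ContDiff ℝ 1 u) (hus : HasCompactSupport u)
    (husub : tsupport u ⊆ Ω ×ˢ Set.Ioo (-ε) ε) :
    |∫ x in Ω ×ˢ Set.Ioo (-ε) ε, ∑ i, f₁ x.1 i * (u x).1 i| ≤
      2 * Real.sqrt 2 * ε ^ ((3 : ℝ) / 2) *
        Real.sqrt (∫ xb in Ω, ∑ i, (f₁ xb i) ^ 2) *
        Real.sqrt (∫ x in Ω ×ˢ Set.Ioo (-ε) ε, jacSq u x) := by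
  set I := Ioo (-ε) ε
  set F : (Fin (d - 1) → ℝ) → ℝ := fun xb ↦ ∑ i, f₁ xb i ^ 2
  have hFint : Integrable F (volume.restrict Ω) :=
    integrable_finsetSum _ fun i _ ↦ (hf₁.eval i).integrable_sq
  have hF : ∫ x in Ω ×ˢ I, F x.1 = 2 * ε * ∫ xb in Ω, F xb := by
    rw [volume_restrict_prod, integral_fun_fst, measureReal_restrict_apply_univ,
      Real.volume_real_Ioo_of_le (by linarith), smul_eq_mul]
    ring
  have hG := setIntegral_sum_sq_fst_le_jacSq hu hus (neg_le_self hε.le) husub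
  rw [sub_neg_eq_add, ← two_mul] at hG
  have hCS := sq_integral_le_integral_mul_integral (φ := fun x ↦ ∑ i, f₁ x.1 i * (u x).1 i)
    (A := fun x ↦ F x.1) (volume_restrict_prod Ω I ▸ hFint.comp_fst _)
    (integrable_sum_sq_fst hu.continuous hus).restrict (fun _ ↦ by positivity)
    (fun _ ↦ by positivity) (fun x ↦ Finset.sum_mul_sq_le_sq_mul_sq _ _ _)
  have hε32 : ε ^ ((3 : ℝ) / 2) = ε * √ε := by
    rw [Real.rpow_div_two_eq_sqrt _ hε.le, show (3 : ℝ) = (3 : ℕ) by norm_num, Real.rpow_natCast]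
    linear_combination √ε * Real.sq_sqrt hε.le
  calc _ ≤ √(∫ x in Ω ×ˢ I, F x.1) * √(∫ x in Ω ×ˢ I, ∑ i, (u x).1 i ^ 2) := by
        rw [← Real.sqrt_mul (integral_nonneg fun _ ↦ by positivity)]
        exact Real.abs_le_sqrt hCS
    _ ≤ √(2 * ε * ∫ xb in Ω, F xb) * √((2 * ε) ^ 2 * ∫ x in Ω ×ˢ I, jacSq u x) := by
        rw [hF]; gcongr
    _ = _ := by
        rw [Real.sqrt_mul (by positivity), Real.sqrt_mul (sq_nonneg _), Real.sqrt_sq (by positivity),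
          Real.sqrt_mul zero_le_two, hε32]
        ring

/-- **Right-hand-side estimate in the proof of Proposition 4.1.** For
`f₁ ∈ L²(Ω; ℝ^{d-1})` and a `C¹` vector field `u` compactly supported in
`Ω^ε = Ω × (−ε, ε)`, writing `u = (u', u_d)`,
`|∫_{Ω^ε} f₁(xb)·u'(x) dx| ≤ 2√2 ε^{3/2} ‖f₁‖_{L²(Ω)} ‖∇u‖_{L²(Ω^ε)}`. -/
theorem stmt9 (d : ℕ) (hd : 2 ≤ d) (Ω : Set (Fin (d - 1) → ℝ)) (hΩo : IsOpen Ω)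
    (hΩb : Bornology.IsBounded Ω)
    (f₁ : (Fin (d - 1) → ℝ) → (Fin (d - 1) → ℝ))
    (hf₁ : MemLp f₁ 2 (volume.restrict Ω)) (ε : ℝ) (hε : 0 < ε)
    (u : ThinVec d → ThinVec d) (hu : ContDiff ℝ 1 u) (hus : HasCompactSupport u)
    (husub : tsupport u ⊆ Ω ×ˢ Set.Ioo (-ε) ε) :
    |∫ x in Ω ×ˢ Set.Ioo (-ε) ε, ∑ i, f₁ x.1 i * (u x).1 i| ≤
      2 * Real.sqrt 2 * ε ^ ((3 : ℝ) / 2) *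
        Real.sqrt (∫ xb in Ω, ∑ i, (f₁ xb i) ^ 2) *
        Real.sqrt (∫ x in Ω ×ˢ Set.Ioo (-ε) ε, jacSq u x) :=
  stmt9_general d Ω f₁ hf₁ ε hε u hu hus husub
end
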